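/- There exists θ ∈ ℝ such that (id₃ ⊗ φ_{C₁}(θ))ρ is not positive semidefinite, where φ_{C₁}(θ)(X) = φ_{C₁}(U(θ) X U(θ)†) with U(θ) = [[cos θ, 0, sin θ],[0,1,0],[−sin θ, 0, cos θ]], and ρ is the TILES PPT state (1/4)(I₉ − Σ_{i=0}^4 |ψ_i⟩⟨ψ_i|). Hence the inner-automorphism extension of the Choi map detects the entanglement of the TILES state. -/

import Mathlib

open Matrix ComplexOrder

/-- Standard basis vector `|i⟩` of `ℂ³`. -/
noncomputable def e (i : Fin 3) : Fin 3 → ℂ := Pi.single i 1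

/-- Tensor product of two vectors of `ℂ³`, as a vector of `ℂ³ ⊗ ℂ³ ≅ ℂ⁹`. -/
def tens (a b : Fin 3 → ℂ) : Fin 3 × Fin 3 → ℂ := fun p => a p.1 * b p.2

/-- The five TILES vectors in `ℂ³ ⊗ ℂ³`. -/
noncomputable def tiles : Fin 5 → (Fin 3 × Fin 3 → ℂ)
  | 0 => (1 / Real.sqrt 2 : ℝ) • tens (e 0) (e 0 - e 1)
  | 1 => (1 / Real.sqrt 2 : ℝ) • tens (e 0 - e 1) (e 2)
  | 2 => (1 / Real.sqrt 2 : ℝ) • tens (e 2) (e 1 - e 2)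
  | 3 => (1 / Real.sqrt 2 : ℝ) • tens (e 1 - e 2) (e 0)
  | 4 => (1 / 3 : ℝ) • tens (e 0 + e 1 + e 2) (e 0 + e 1 + e 2)

/-- The TILES state `ρ = (1/4)(I₉ − Σᵢ |ψᵢ⟩⟨ψᵢ|)`. -/
noncomputable def tilesState : Matrix (Fin 3 × Fin 3) (Fin 3 × Fin 3) ℂ :=
  (1 / 4 : ℂ) •
    (1 - ∑ i : Fin 5, Matrix.vecMulVec (tiles i) (fun q => (starRingEnd ℂ) (tiles i q)))

/-- The Choi map `φ_{C₁}` on `M₃(ℂ)`. -/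
noncomputable def choi1 (x : Matrix (Fin 3) (Fin 3) ℂ) : Matrix (Fin 3) (Fin 3) ℂ :=
  (1 / 2 : ℂ) •
    !![x 0 0 + x 1 1, -x 0 1, -x 0 2;
       -x 1 0, x 1 1 + x 2 2, -x 1 2;
       -x 2 0, -x 2 1, x 2 2 + x 0 0]

/-- The extension `id₃ ⊗ φ` of a map `φ` on `M₃(ℂ)`, acting blockwise. -/
noncomputable def matExt3 (φ : Matrix (Fin 3) (Fin 3) ℂ → Matrix (Fin 3) (Fin 3) ℂ)
    (ρ : Matrix (Fin 3 × Fin 3) (Fin 3 × Fin 3) ℂ) :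
    Matrix (Fin 3 × Fin 3) (Fin 3 × Fin 3) ℂ :=
  Matrix.of fun p q => φ (Matrix.of fun a b => ρ (p.1, a) (q.1, b)) p.2 q.2

/-- The rotation matrix `U(θ)`. -/
noncomputable def rotU (θ : ℝ) : Matrix (Fin 3) (Fin 3) ℂ :=
  !![(Real.cos θ : ℂ), 0, (Real.sin θ : ℂ);
     0, 1, 0;
     (-Real.sin θ : ℂ), 0, (Real.cos θ : ℂ)]

/-!
Every TILES vector is a product vector `ψᵢ = rᵢ • aᵢ ⊗ bᵢ`, so for a linear unital `Φ` the block
extension gives `(id ⊗ Φ) ρ = ¼ (1 - Σᵢ rᵢ² |aᵢ⟩⟨aᵢ| ⊗ Φ |bᵢ⟩⟨bᵢ|)`, and `φ_{C₁}(θ)` is unital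
because `U(θ)` is unitary. Testing against `v = vec X` turns `⟨v, (|a⟩⟨a| ⊗ B) v⟩` into
`⟨X ā, B (X ā)⟩`, so the quadratic form is a sum of five `3 × 3` computations. At
`cos θ = -3/5`, `sin θ = 4/5` and `X = tilesWitness` it equals `-47/1800`.
-/

open Kronecker

theorem star_vec_dotProduct_kronecker_mulVec_vec {m n R : Type*} [Fintype m] [Fintype n]
    [CommRing R] [StarRing R] (a : m → R) (B : Matrix n n R) (X : Matrix n m R) :
    star (vec X) ⬝ᵥ ((vecMulVec a (star a) ⊗ₖ B) *ᵥ vec X) =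
      star (X *ᵥ star a) ⬝ᵥ (B *ᵥ (X *ᵥ star a)) := by
  rw [kronecker_mulVec_vec, star_vec_dotProduct_vec, transpose_vecMulVec, Matrix.mul_assoc,
    mul_vecMulVec, mul_vecMulVec, mul_vecMulVec, trace_vecMulVec, dotProduct_comm,
    dotProduct_mulVec, vecMul_conjTranspose]

theorem mul_vecMulVec_star_mul_conjTranspose {m n R : Type*} [Fintype n] [CommRing R]
    [StarRing R] (U : Matrix m n R) (b : n → R) :
    U * vecMulVec b (star b) * Uᴴ = vecMulVec (U *ᵥ b) (star (U *ᵥ b)) := by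
  rw [mul_vecMulVec, vecMulVec_mul, star_mulVec]

theorem vecMulVec_real_smul {n : Type*} (r : ℝ) (v : n → ℂ) :
    vecMulVec (r • v) (star (r • v)) = ((r ^ 2 : ℝ) : ℂ) • vecMulVec v (star v) := by
  ext p q
  simp [vecMulVec_apply, Complex.real_smul]
  ring

section BlockExtension

variable (Φ : Matrix (Fin 3) (Fin 3) ℂ →ₗ[ℂ] Matrix (Fin 3) (Fin 3) ℂ)

noncomputable def matExt3LinearMap :
    Matrix (Fin 3 × Fin 3) (Fin 3 × Fin 3) ℂ →ₗ[ℂ] Matrix (Fin 3 × Fin 3) (Fin 3 × Fin 3) ℂ where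
  toFun := matExt3 Φ
  map_add' ρ σ := by
    ext p q
    exact congrFun₂ (map_add Φ (of fun a b => ρ (p.1, a) (q.1, b))
      (of fun a b => σ (p.1, a) (q.1, b))) p.2 q.2
  map_smul' c ρ := by
    ext p q
    exact congrFun₂ (map_smul Φ c (of fun a b => ρ (p.1, a) (q.1, b))) p.2 q.2

theorem matExt3LinearMap_apply (ρ : Matrix (Fin 3 × Fin 3) (Fin 3 × Fin 3) ℂ) :
    matExt3LinearMap Φ ρ = matExt3 Φ ρ := rfl

theorem matExt3_smul (c : ℂ) (ρ : Matrix (Fin 3 × Fin 3) (Fin 3 × Fin 3) ℂ) :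
    matExt3 Φ (c • ρ) = c • matExt3 Φ ρ :=
  (matExt3LinearMap Φ).map_smul c ρ

theorem matExt3_kronecker (A B : Matrix (Fin 3) (Fin 3) ℂ) :
    matExt3 Φ (A ⊗ₖ B) = A ⊗ₖ Φ B := by
  ext p q
  exact congrFun₂ (map_smul Φ (A p.1 q.1) B) p.2 q.2

theorem matExt3_one (hΦ : Φ 1 = 1) : matExt3 Φ 1 = 1 := by
  rw [← one_kronecker_one, matExt3_kronecker, hΦ]

end BlockExtension

theorem vecMulVec_tens (a b : Fin 3 → ℂ) :
    vecMulVec (tens a b) (star (tens a b)) = vecMulVec a (star a) ⊗ₖ vecMulVec b (star b) := by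
  ext p q
  simp only [tens, vecMulVec_apply, kroneckerMap_apply, Pi.star_apply, star_mul']
  ring

theorem tilesState_eq_smul_sub :
    tilesState = (1 / 4 : ℂ) • (1 - ∑ i : Fin 5, vecMulVec (tiles i) (star (tiles i))) := rfl

theorem matExt3_tilesState (Φ : Matrix (Fin 3) (Fin 3) ℂ →ₗ[ℂ] Matrix (Fin 3) (Fin 3) ℂ)
    (hΦ : Φ 1 = 1) :
    matExt3 Φ tilesState =
      (1 / 4 : ℂ) • (1 - ∑ i : Fin 5, matExt3 Φ (vecMulVec (tiles i) (star (tiles i)))) := by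
  rw [← matExt3LinearMap_apply, tilesState_eq_smul_sub, map_smul, map_sub, map_sum]
  simp only [matExt3LinearMap_apply, matExt3_one Φ hΦ]

noncomputable def choi1LinearMap : Matrix (Fin 3) (Fin 3) ℂ →ₗ[ℂ] Matrix (Fin 3) (Fin 3) ℂ where
  toFun := choi1
  map_add' X Y := by
    ext i j; fin_cases i <;> fin_cases j <;> simp [choi1] <;> ring
  map_smul' c X := by
    ext i j; fin_cases i <;> fin_cases j <;> simp [choi1] <;> ring

theorem choi1_one : choi1 1 = 1 := by
  ext i j; fin_cases i <;> fin_cases j <;> simp [choi1] <;> norm_num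

theorem rotU_mul_conjTranspose (θ : ℝ) : rotU θ * (rotU θ)ᴴ = 1 := by
  ext i j
  fin_cases i <;> fin_cases j <;>
    simp [rotU, mul_apply, Fin.sum_univ_three, -Complex.ofReal_cos, -Complex.ofReal_sin] <;>
    norm_cast <;> first | linear_combination Real.sin_sq_add_cos_sq θ | ring

noncomputable def rotatedChoi (θ : ℝ) :
    Matrix (Fin 3) (Fin 3) ℂ →ₗ[ℂ] Matrix (Fin 3) (Fin 3) ℂ :=
  choi1LinearMap ∘ₗ LinearMap.mulRight ℂ (rotU θ)ᴴ ∘ₗ LinearMap.mulLeft ℂ (rotU θ)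

theorem coe_rotatedChoi (θ : ℝ) :
    ⇑(rotatedChoi θ) = fun X => choi1 (rotU θ * X * (rotU θ)ᴴ) := rfl

theorem rotatedChoi_one (θ : ℝ) : rotatedChoi θ 1 = 1 := by
  simp only [coe_rotatedChoi, Matrix.mul_one, rotU_mul_conjTranspose, choi1_one]

theorem rotatedChoi_vecMulVec (θ : ℝ) (b : Fin 3 → ℂ) :
    rotatedChoi θ (vecMulVec b (star b)) =
      choi1 (vecMulVec (rotU θ *ᵥ b) (star (rotU θ *ᵥ b))) :=
  congrArg choi1 (mul_vecMulVec_star_mul_conjTranspose (rotU θ) b)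

noncomputable def tilesWitness : Matrix (Fin 3) (Fin 3) ℂ := !![-1, 0, 1; 2, 0, 2; -1, 3, -1]

theorem star_vec_tilesWitness_dotProduct_mulVec (θ : ℝ) (hc : Real.cos θ = -3 / 5)
    (hs : Real.sin θ = 4 / 5) :
    star (vec tilesWitness) ⬝ᵥ (matExt3 (rotatedChoi θ) tilesState *ᵥ vec tilesWitness) =
      -47 / 1800 := by
  have hhalf : (1 / √2 : ℝ) ^ 2 = 1 / 2 := by rw [div_pow, Real.sq_sqrt zero_le_two]; norm_num
  rw [matExt3_tilesState _ (rotatedChoi_one θ)]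
  simp only [smul_mulVec, sub_mulVec, one_mulVec, sum_mulVec, dotProduct_smul, dotProduct_sub,
    dotProduct_sum]
  simp only [Fin.sum_univ_five, tiles, vecMulVec_real_smul, hhalf, vecMulVec_tens, matExt3_smul,
    matExt3_kronecker, smul_mulVec, dotProduct_smul, star_vec_dotProduct_kronecker_mulVec_vec,
    rotatedChoi_vecMulVec, star_vec_dotProduct_vec]
  simp [choi1, rotU, hc, hs, e, tilesWitness, mulVec, dotProduct, vecMulVec_apply,
    Fin.sum_univ_three, mul_apply, Pi.single_apply, trace, map_ofNat]
  norm_num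

theorem exists_cos_eq_sin_eq : ∃ θ : ℝ, Real.cos θ = -3 / 5 ∧ Real.sin θ = 4 / 5 := by
  refine ⟨Real.arccos (-3 / 5), Real.cos_arccos (by norm_num) (by norm_num), ?_⟩
  rw [Real.sin_arccos, show 1 - (-3 / 5 : ℝ) ^ 2 = (4 / 5) ^ 2 by norm_num]
  exact Real.sqrt_sq (by norm_num)

/-- Some inner-automorphism extension `φ_{C₁}(θ) = φ_{C₁} ∘ U(θ)` of the Choi map
detects the entanglement of the TILES state. -/
theorem extended_choi_detects_tiles :
    ∃ θ : ℝ,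
      ¬ (matExt3 (fun X => choi1 (rotU θ * X * (rotU θ)ᴴ)) tilesState).PosSemidef := by
  obtain ⟨θ, hc, hs⟩ := exists_cos_eq_sin_eq
  refine ⟨θ, fun hpsd => ?_⟩
  have hnonneg := hpsd.dotProduct_mulVec_nonneg (vec tilesWitness)
  rw [← coe_rotatedChoi, star_vec_tilesWitness_dotProduct_mulVec θ hc hs] at hnonneg
  norm_num [Complex.le_def] at hnonneg
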